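/- Let N ≥ 1 and z ∈ ℍ, and set q = e^{2πiz} and ξ = e^{2πi/N}. Then log|Δ_N(z)| = φ(N)·log|q| + 24·∑_{n=1}^{∞} ∑_{1 ≤ k ≤ N, gcd(k,N)=1} log|1 − ξᵏ·qⁿ| = 24·∑_{1 ≤ k ≤ N, gcd(k,N)=1} log_q(ξᵏ), where φ is Euler's totient function and all series converge absolutely. -/

import Mathlib

noncomputable section
open Complex Real MeasureTheory UpperHalfPlane Filter Topology
open scoped UpperHalfPlane

/-- The discriminant modular form `Δ(z) = e^{2πiz} ∏_{n ≥ 1} (1 - e^{2πinz})^{24}`. -/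
def Delta (z : ℂ) : ℂ :=
  Complex.exp (2 * (π : ℂ) * Complex.I * z) *
    ∏' n : ℕ, (1 - Complex.exp (2 * (π : ℂ) * Complex.I * ((n : ℂ) + 1) * z)) ^ 24

/-- `Δ_N(z) = ∏_{d ∣ N} Δ(Nz/d)^{μ(d)}` (exponent `-1` meaning the reciprocal). -/
def DeltaN (N : ℕ) (z : ℂ) : ℂ :=
  ∏ d ∈ N.divisors, Delta ((N : ℂ) * z / (d : ℂ)) ^ ((ArithmeticFunction.moebius d : ℤ))

/-- `q = e^{2πiz}` for `z ∈ ℍ`. -/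
def qq (z : ℍ) : ℂ := Complex.exp (2 * (π : ℂ) * Complex.I * (z : ℂ))

/-- `ξ = e^{2πi/N}`, a primitive `N`-th root of unity. -/
def xiN (N : ℕ) : ℂ := Complex.exp (2 * (π : ℂ) * Complex.I / (N : ℂ))

/-- The `q`-logarithm `log_q(t) = (1/24) log|qt| + ∑_{n ≥ 1} log|1 - qⁿ t|`. -/
def qlog (z : ℍ) (t : ℂ) : ℝ :=
  (1 / 24) * Real.log (‖qq z * t‖) +
    ∑' n : ℕ, Real.log (‖1 - (qq z) ^ (n + 1) * t‖)


/-!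
With `q = e^{2πiz}`, the product formula gives `log|Δ(mz)| = m log|q| + 24 ∑ₙ log|1 - (qⁿ)^m|`.
Grouping the `m`-th roots of unity by their exact order,
`1 - t^m = ∏_{d ∣ m} ∏_{(k,d)=1} (1 - ξ_d^k t)`, and `m = ∑_{d ∣ m} φ(d)`; so `m ↦ log|Δ(mz)|`
is the divisor sum of `d ↦ φ(d) log|q| + 24 ∑ₙ ∑_{(k,d)=1} log|1 - ξ_d^k qⁿ|`, and Möbius
inversion identifies the latter at `d = N` with `log|Δ_N(z)|`. The logarithms are summable
because `log(1 + w) = O(w)` and `qⁿ` is geometric.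
-/

open Finset

namespace Complex

variable {ι : Type*} {f : ι → ℂ}

lemma tprod_one_sub_eq_cexp_tsum_log (hf : Summable f) (h1 : ∀ i, f i ≠ 1) :
    ∏' i, (1 - f i) = cexp (∑' i, log (1 - f i)) :=
  (cexp_tsum_eq_tprod (fun i => sub_ne_zero.mpr (h1 i).symm)
    (by simpa [sub_eq_add_neg] using summable_log_one_add_of_summable hf.neg)).symm

lemma summable_log_norm_one_sub (hf : Summable f) :
    Summable fun i => Real.log ‖1 - f i‖ := by
  simpa [sub_eq_add_neg, log_re] using
    reCLM.summable (summable_log_one_add_of_summable hf.neg)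

lemma log_norm_tprod_one_sub (hf : Summable f) (h1 : ∀ i, f i ≠ 1) :
    Real.log ‖∏' i, (1 - f i)‖ = ∑' i, Real.log ‖1 - f i‖ := by
  have hlog : Summable fun i => log (1 - f i) := by
    simpa [sub_eq_add_neg] using summable_log_one_add_of_summable hf.neg
  rw [tprod_one_sub_eq_cexp_tsum_log hf h1, norm_exp, Real.log_exp, re_tsum hlog]
  simp only [log_re]

end Complex

lemma summable_pow_succ {q : ℂ} (hq : ‖q‖ < 1) : Summable fun n : ℕ => q ^ (n + 1) :=
  (summable_nat_add_iff 1).mpr (summable_geometric_of_norm_lt_one hq)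

lemma pow_succ_ne_one {q : ℂ} (hq : ‖q‖ < 1) (n : ℕ) : q ^ (n + 1) ≠ 1 := by
  intro h
  have : ‖q‖ ^ (n + 1) < 1 := pow_lt_one₀ (norm_nonneg q) hq n.succ_ne_zero
  rw [← norm_pow, h, norm_one] at this
  exact this.false

lemma tprod_one_sub_pow_succ_ne_zero {q : ℂ} (hq : ‖q‖ < 1) :
    ∏' n : ℕ, (1 - q ^ (n + 1)) ≠ 0 := by
  rw [Complex.tprod_one_sub_eq_cexp_tsum_log (summable_pow_succ hq) (pow_succ_ne_one hq)]
  exact Complex.exp_ne_zero _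

lemma qq_ne_zero (z : ℍ) : qq z ≠ 0 := Complex.exp_ne_zero _

lemma norm_qq_pow_lt_one (z : ℍ) {m : ℕ} (hm : m ≠ 0) : ‖qq z ^ m‖ < 1 := by
  rw [norm_pow]
  exact pow_lt_one₀ (norm_nonneg _) (norm_exp_two_pi_I_lt_one z) hm

lemma Delta_natCast_mul (z : ℍ) {m : ℕ} (hm : m ≠ 0) :
    Delta (m * z) = qq z ^ m * (∏' n : ℕ, (1 - (qq z ^ m) ^ (n + 1))) ^ 24 := by
  have hexp : ∀ c : ℕ, cexp (2 * π * Complex.I * c * (m * z)) = qq z ^ (m * c) := by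
    intro c
    rw [qq, ← Complex.exp_nat_mul]
    push_cast
    ring_nf
  have hexp_one := hexp 1
  simp only [Nat.cast_one, mul_one] at hexp_one
  rw [Delta, ← (ModularForm.multipliable_one_sub_pow (norm_qq_pow_lt_one z hm)).tprod_pow]
  simp_rw [hexp_one, ← Nat.cast_succ, hexp, ← pow_mul]

lemma Delta_natCast_mul_ne_zero (z : ℍ) {m : ℕ} (hm : m ≠ 0) : Delta (m * z) ≠ 0 := by
  rw [Delta_natCast_mul z hm]
  exact mul_ne_zero (pow_ne_zero _ (qq_ne_zero z))
    (pow_ne_zero _ (tprod_one_sub_pow_succ_ne_zero (norm_qq_pow_lt_one z hm)))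

lemma log_norm_Delta_natCast_mul (z : ℍ) {m : ℕ} (hm : m ≠ 0) :
    Real.log ‖Delta (m * z)‖ =
      m * Real.log ‖qq z‖ + 24 * ∑' n : ℕ, Real.log ‖1 - (qq z ^ (n + 1)) ^ m‖ := by
  have hQ := norm_qq_pow_lt_one z hm
  rw [Delta_natCast_mul z hm, norm_mul, norm_pow, norm_pow,
    Real.log_mul (by simp [qq_ne_zero]) (by simp [tprod_one_sub_pow_succ_ne_zero hQ]),
    Real.log_pow, Real.log_pow,
    Complex.log_norm_tprod_one_sub (summable_pow_succ hQ) (pow_succ_ne_one hQ)]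
  simp only [← pow_mul, mul_comm m, Nat.cast_ofNat]

lemma log_norm_DeltaN_eq_sum_moebius (N : ℕ) (z : ℍ) :
    Real.log ‖DeltaN N z‖ = ∑ d ∈ N.divisors, ArithmeticFunction.moebius d •
      ((N / d : ℕ) * Real.log ‖qq z‖ +
        24 * ∑' n : ℕ, Real.log ‖1 - (qq z ^ (n + 1)) ^ (N / d)‖) := by
  have hcast : ∀ d ∈ N.divisors, (N : ℂ) * z / d = (N / d : ℕ) * z := fun d hd => by
    rw [Nat.cast_div (Nat.dvd_of_mem_divisors hd) (by simp [(Nat.pos_of_mem_divisors hd).ne'])]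
    ring
  have hquot : ∀ d ∈ N.divisors, N / d ≠ 0 := fun d hd =>
    (Nat.div_pos (Nat.divisor_le hd) (Nat.pos_of_mem_divisors hd)).ne'
  rw [DeltaN, norm_prod, Real.log_prod fun d hd => by
    rw [hcast d hd, norm_zpow]
    exact zpow_ne_zero _ (norm_ne_zero_iff.mpr (Delta_natCast_mul_ne_zero z (hquot d hd)))]
  refine sum_congr rfl fun d hd => ?_
  rw [norm_zpow, Real.log_zpow, hcast d hd, log_norm_Delta_natCast_mul z (hquot d hd),
    zsmul_eq_mul]

lemma IsPrimitiveRoot.prod_filter_coprime_Icc_pow {R M : Type*} [CommRing R] [IsDomain R]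
    [CommMonoid M] {ζ : R} {d : ℕ} (hζ : IsPrimitiveRoot ζ d) (f : R → M) :
    ∏ k ∈ Icc 1 d with k.Coprime d, f (ζ ^ k) = ∏ μ ∈ primitiveRoots d R, f μ := by
  rcases Nat.eq_zero_or_pos d with rfl | hd
  · simp
  refine prod_nbij (ζ ^ ·) (fun k hk => ?_) (fun a ha b hb hab => ?_) (fun μ hμ => ?_)
    (fun _ _ => rfl)
  · simp only [mem_filter, mem_Icc] at hk
    exact (mem_primitiveRoots hd).mpr (hζ.pow_of_coprime k hk.2)
  · simp only [coe_filter, mem_Icc, Set.mem_ofPred_eq] at ha hb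
    have hpred : ζ ^ (a - 1) * ζ = ζ ^ (b - 1) * ζ := by
      rwa [← pow_succ, ← pow_succ, Nat.sub_add_cancel ha.1.1, Nat.sub_add_cancel hb.1.1]
    have := hζ.injOn_pow_mul (hζ.ne_zero hd.ne') (by simp; omega) (by simp; omega) hpred
    omega
  · have hμ' := (mem_primitiveRoots hd).mp hμ
    have : NeZero d := ⟨hd.ne'⟩
    obtain ⟨i, hi, rfl⟩ := hζ.eq_pow_of_pow_eq_one hμ'.pow_eq_one
    have hcop := (hζ.pow_iff_coprime hd i).mp hμ'
    simp only [coe_filter, mem_Icc, Set.mem_ofPred_eq, Set.mem_image]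
    rcases Nat.eq_zero_or_pos i with rfl | hi0
    · exact ⟨d, ⟨⟨hd, le_rfl⟩, Nat.coprime_self d |>.mpr (Nat.coprime_zero_left d |>.mp hcop)⟩,
        by simp [hζ.pow_eq_one]⟩
    · exact ⟨i, ⟨⟨hi0, hi.le⟩, hcop⟩, rfl⟩

lemma prod_divisors_prod_primitiveRoots_one_sub_mul {R : Type*} [CommRing R] [IsDomain R]
    {ζ : R} {n : ℕ} (hn : 0 < n) (hζ : IsPrimitiveRoot ζ n) (t : R) :
    ∏ d ∈ n.divisors, ∏ μ ∈ primitiveRoots d R, (1 - μ * t) = 1 - t ^ n := by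
  classical
  rw [← prod_biUnion fun a _ b _ hab => IsPrimitiveRoot.disjoint hab,
    ← IsPrimitiveRoot.nthRoots_one_eq_biUnion_primitiveRoots,
    ← hζ.pow_sub_pow_eq_prod_sub_mul 1 t hn, one_pow]

lemma isPrimitiveRoot_xiN {n : ℕ} (hn : n ≠ 0) : IsPrimitiveRoot (xiN n) n :=
  Complex.isPrimitiveRoot_exp n hn

lemma norm_xiN (n : ℕ) : ‖xiN n‖ = 1 := by
  simp [xiN, Complex.norm_exp]

lemma prod_divisors_prod_filter_coprime_one_sub_xiN_pow_mul {n : ℕ} (hn : 0 < n) (t : ℂ) :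
    ∏ d ∈ n.divisors, ∏ k ∈ Icc 1 d with k.Coprime d, (1 - xiN d ^ k * t) = 1 - t ^ n := by
  rw [← prod_divisors_prod_primitiveRoots_one_sub_mul hn (isPrimitiveRoot_xiN hn.ne') t]
  exact prod_congr rfl fun d hd =>
    (isPrimitiveRoot_xiN (Nat.pos_of_mem_divisors hd).ne').prod_filter_coprime_Icc_pow
      fun μ => 1 - μ * t

lemma sum_divisors_sum_filter_coprime_log_norm_one_sub_xiN_pow_mul {t : ℂ} (ht : ‖t‖ < 1)
    {n : ℕ} (hn : 0 < n) :
    ∑ d ∈ n.divisors, ∑ k ∈ Icc 1 d with k.Coprime d, Real.log ‖1 - xiN d ^ k * t‖ =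
      Real.log ‖1 - t ^ n‖ := by
  have hne : ∀ d k, ‖1 - xiN d ^ k * t‖ ≠ 0 := fun d k => by
    have hlt : ‖xiN d ^ k * t‖ < 1 := by rwa [norm_mul, norm_pow, norm_xiN, one_pow, one_mul]
    rw [norm_ne_zero_iff, sub_ne_zero]
    rintro h
    rw [← h, norm_one] at hlt
    exact hlt.false
  rw [← prod_divisors_prod_filter_coprime_one_sub_xiN_pow_mul hn, norm_prod,
    Real.log_prod fun d _ => by rw [norm_prod]; exact prod_ne_zero_iff.mpr fun k _ => hne d k]
  simp_rw [norm_prod]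
  exact sum_congr rfl fun d _ => (Real.log_prod fun k _ => hne d k).symm

lemma card_filter_coprime_Icc (N : ℕ) : #{k ∈ Icc 1 N | k.Coprime N} = N.totient := by
  rw [← Nat.filter_coprime_Ico_eq_totient N 1, add_comm, Ico_add_one_right_eq_Icc]
  simp only [Nat.coprime_comm]

lemma summable_log_norm_one_sub_xiN_pow_mul_qq_pow (z : ℍ) (d k : ℕ) :
    Summable fun n : ℕ => Real.log ‖1 - xiN d ^ k * qq z ^ (n + 1)‖ :=
  Complex.summable_log_norm_one_sub
    ((summable_pow_succ (by simpa using norm_qq_pow_lt_one z one_ne_zero)).mul_left _)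

lemma log_norm_DeltaN {N : ℕ} (hN : 0 < N) (z : ℍ) :
    Real.log ‖DeltaN N z‖ = N.totient * Real.log ‖qq z‖ +
      24 * ∑' n : ℕ, ∑ k ∈ Icc 1 N with k.Coprime N, Real.log ‖1 - xiN N ^ k * qq z ^ (n + 1)‖ := by
  set f : ℕ → ℝ := fun d => d.totient * Real.log ‖qq z‖ +
    24 * ∑' n : ℕ, ∑ k ∈ Icc 1 d with k.Coprime d, Real.log ‖1 - xiN d ^ k * qq z ^ (n + 1)‖
  set g : ℕ → ℝ := fun m => m * Real.log ‖qq z‖ +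
    24 * ∑' n : ℕ, Real.log ‖1 - (qq z ^ (n + 1)) ^ m‖
  have hfg : ∀ m > 0, ∑ d ∈ m.divisors, f d = g m := by
    intro m hm
    simp only [f, g, sum_add_distrib, ← sum_mul, ← mul_sum]
    rw [← Nat.cast_sum, Nat.sum_totient, ← Summable.tsum_finsetSum fun d _ =>
      summable_sum fun k _ => summable_log_norm_one_sub_xiN_pow_mul_qq_pow z d k]
    simp_rw [sum_divisors_sum_filter_coprime_log_norm_one_sub_xiN_pow_mul
      (norm_qq_pow_lt_one z (Nat.succ_ne_zero _)) hm]
  have hinv := ArithmeticFunction.sum_eq_iff_sum_smul_moebius_eq.mp hfg N hN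
  rw [Nat.sum_divisorsAntidiagonal fun d e => ArithmeticFunction.moebius d • g e] at hinv
  exact (log_norm_DeltaN_eq_sum_moebius N z).trans hinv

lemma sum_qlog_xiN_pow (N : ℕ) (z : ℍ) :
    ∑ k ∈ Icc 1 N with k.Coprime N, qlog z (xiN N ^ k) = N.totient / 24 * Real.log ‖qq z‖ +
      ∑' n : ℕ, ∑ k ∈ Icc 1 N with k.Coprime N, Real.log ‖1 - xiN N ^ k * qq z ^ (n + 1)‖ := by
  rw [Summable.tsum_finsetSum fun k _ => summable_log_norm_one_sub_xiN_pow_mul_qq_pow z N k]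
  simp only [qlog, sum_add_distrib, norm_mul, norm_pow, norm_xiN, one_pow, mul_one, sum_const,
    card_filter_coprime_Icc, nsmul_eq_mul, mul_comm (qq z ^ _)]
  ring

/-- for `N ≥ 1`, `z ∈ ℍ`, `q = e^{2πiz}`, `ξ = e^{2πi/N}`,
`log|Δ_N(z)| = φ(N) log|q| + 24 ∑_{n ≥ 1} ∑_{1 ≤ k ≤ N, (k,N)=1} log|1 - ξᵏ qⁿ|
             = 24 ∑_{1 ≤ k ≤ N, (k,N)=1} log_q(ξᵏ)`,
all series converging absolutely. -/
theorem stmt17 (N : ℕ) (hN : 1 ≤ N) (z : ℍ) :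
    Summable (fun n : ℕ =>
      ∑ k ∈ Finset.filter (fun k => Nat.Coprime k N) (Finset.Icc 1 N),
        |Real.log (‖1 - (xiN N) ^ k * (qq z) ^ (n + 1)‖)|) ∧
    Real.log (‖DeltaN N (z : ℂ)‖)
      = (Nat.totient N : ℝ) * Real.log (‖qq z‖) +
          24 * ∑' n : ℕ,
            ∑ k ∈ Finset.filter (fun k => Nat.Coprime k N) (Finset.Icc 1 N),
              Real.log (‖1 - (xiN N) ^ k * (qq z) ^ (n + 1)‖) ∧
    Real.log (‖DeltaN N (z : ℂ)‖)
      = 24 * ∑ k ∈ Finset.filter (fun k => Nat.Coprime k N) (Finset.Icc 1 N),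
          qlog z ((xiN N) ^ k) := by
  refine ⟨summable_sum fun k _ => (summable_log_norm_one_sub_xiN_pow_mul_qq_pow z N k).abs,
    log_norm_DeltaN hN z, ?_⟩
  rw [log_norm_DeltaN hN z, sum_qlog_xiN_pow]
  ring
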